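/- If every Boolean valuation that makes all formulas in Γ true makes A true, then there is a deduction of A from assumptions in Γ in the system C that has the subformula property: every formula occurring in the deduction is a subformula of A or of some formula in Γ. -/

import Mathlib

/- Milne's system **C** of classical propositional logic with general
introduction and general elimination rules (Kürbis, "Normalisation and
Subformula Property for a System of Classical Logic with Tarski's Rule").

Formulas are built from atoms by ¬, ∧, ∨, ⊃. -/
inductive Formula : Type
  | atom : ℕ → Formula
  | neg  : Formula → Formula
  | conj : Formula → Formula → Formula
  | disj : Formula → Formula → Formula
  | imp  : Formula → Formula → Formula
  deriving DecidableEq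

/-- Raw deduction trees of the system **C**.  Assumption occurrences carry a
label (natural number) marking their assumption class; each rule that
discharges assumptions records the label(s) of the class(es) it discharges.
Constructor arguments list first the labels, then the formulas figuring in the
rule, then the immediate subdeductions (major premise first for eliminations;
for introductions: the specific premise(s), then the deduction of the
arbitrary premise from the discharged major assumption).

* `ass ℓ A`           : the assumption `A`, in assumption class `ℓ`.
* `andI ℓ A B ΣA ΣB Π` : from `A`, `B` and `C`-from-`[A∧B]^ℓ` infer `C`.
* `andE ℓA ℓB A B M Π` : from `A∧B` and `C`-from-`[A]^ℓA,[B]^ℓB` infer `C`.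
* `orI₁ ℓ A B ΣA Π`    : from `A` and `C`-from-`[A∨B]^ℓ` infer `C`.
* `orI₂ ℓ A B ΣB Π`    : from `B` and `C`-from-`[A∨B]^ℓ` infer `C`.
* `orE ℓA ℓB A B M Π Ξ`: from `A∨B`, `C`-from-`[A]^ℓA`, `C`-from-`[B]^ℓB` infer `C`.
* `impI ℓ A B ΣB Π`    : from `B` and `C`-from-`[A⊃B]^ℓ` infer `C`.
* `tr ℓA ℓAB A B Π Ξ`  : Tarski's Rule: from `C`-from-`[A]^ℓA` and
                         `C`-from-`[A⊃B]^ℓAB` infer `C`.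
* `impE ℓ A B M ΣA Π`  : from `A⊃B`, `A` and `C`-from-`[B]^ℓ` infer `C`.
* `negI ℓA ℓnA A Π Ξ`  : from `C`-from-`[A]^ℓA` and `C`-from-`[¬A]^ℓnA` infer `C`.
* `negE A C M ΣA`      : from `¬A` and `A` infer any `C`. -/
inductive PT : Type
  | ass  : ℕ → Formula → PT
  | andI : ℕ → Formula → Formula → PT → PT → PT → PT
  | andE : ℕ → ℕ → Formula → Formula → PT → PT → PT
  | orI₁ : ℕ → Formula → Formula → PT → PT → PT
  | orI₂ : ℕ → Formula → Formula → PT → PT → PT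
  | orE  : ℕ → ℕ → Formula → Formula → PT → PT → PT → PT
  | impI : ℕ → Formula → Formula → PT → PT → PT
  | tr   : ℕ → ℕ → Formula → Formula → PT → PT → PT
  | impE : ℕ → Formula → Formula → PT → PT → PT → PT
  | negI : ℕ → ℕ → Formula → PT → PT → PT
  | negE : Formula → Formula → PT → PT → PT
  deriving DecidableEq

namespace PT

/-- The conclusion (root formula) of a deduction tree. -/
def concl : PT → Formula
  | .ass _ A => A
  | .andI _ _ _ _ _ r => r.concl
  | .andE _ _ _ _ _ q => q.concl
  | .orI₁ _ _ _ _ q => q.concl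
  | .orI₂ _ _ _ _ q => q.concl
  | .orE _ _ _ _ _ q _ => q.concl
  | .impI _ _ _ _ q => q.concl
  | .tr _ _ _ _ p _ => p.concl
  | .impE _ _ _ _ _ r => r.concl
  | .negI _ _ _ p _ => p.concl
  | .negE _ C _ _ => C

/-- The multiset of open (undischarged) labelled assumptions of a deduction. -/
def openAss : PT → Multiset (ℕ × Formula)
  | .ass ℓ A => {(ℓ, A)}
  | .andI ℓ _ _ p q r =>
      p.openAss + q.openAss + (r.openAss.filter fun z => z.1 ≠ ℓ)
  | .andE ℓA ℓB _ _ p q =>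
      p.openAss + (q.openAss.filter fun z => z.1 ≠ ℓA ∧ z.1 ≠ ℓB)
  | .orI₁ ℓ _ _ p q => p.openAss + (q.openAss.filter fun z => z.1 ≠ ℓ)
  | .orI₂ ℓ _ _ p q => p.openAss + (q.openAss.filter fun z => z.1 ≠ ℓ)
  | .orE ℓA ℓB _ _ p q r =>
      p.openAss + (q.openAss.filter fun z => z.1 ≠ ℓA) +
        (r.openAss.filter fun z => z.1 ≠ ℓB)
  | .impI ℓ _ _ p q => p.openAss + (q.openAss.filter fun z => z.1 ≠ ℓ)
  | .tr ℓA ℓAB _ _ p q =>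
      (p.openAss.filter fun z => z.1 ≠ ℓA) + (q.openAss.filter fun z => z.1 ≠ ℓAB)
  | .impE ℓ _ _ p q r =>
      p.openAss + q.openAss + (r.openAss.filter fun z => z.1 ≠ ℓ)
  | .negI ℓA ℓnA _ p q =>
      (p.openAss.filter fun z => z.1 ≠ ℓA) + (q.openAss.filter fun z => z.1 ≠ ℓnA)
  | .negE _ _ p q => p.openAss + q.openAss

/-- Correctness of a deduction tree: the subdeductions conclude the right
formulas, every open assumption in a discharged class has the form required
by the rule, and (ban on vacuous discharge above arbitrary premises) each
discharge actually discharges at least one assumption occurrence — in `∧E`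
at least one of the two classes `[A]`, `[B]` is non-empty, which reflects the
option of discharging only one of the two assumptions. -/
def wf : PT → Prop
  | .ass _ _ => True
  | .andI ℓ A B p q r => p.wf ∧ q.wf ∧ r.wf ∧ p.concl = A ∧ q.concl = B ∧
      (∀ F, (ℓ, F) ∈ r.openAss → F = Formula.conj A B) ∧
      (ℓ, Formula.conj A B) ∈ r.openAss
  | .andE ℓA ℓB A B p q => p.wf ∧ q.wf ∧ p.concl = Formula.conj A B ∧
      (∀ F, (ℓA, F) ∈ q.openAss → F = A) ∧ (∀ F, (ℓB, F) ∈ q.openAss → F = B) ∧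
      ((ℓA, A) ∈ q.openAss ∨ (ℓB, B) ∈ q.openAss)
  | .orI₁ ℓ A B p q => p.wf ∧ q.wf ∧ p.concl = A ∧
      (∀ F, (ℓ, F) ∈ q.openAss → F = Formula.disj A B) ∧
      (ℓ, Formula.disj A B) ∈ q.openAss
  | .orI₂ ℓ A B p q => p.wf ∧ q.wf ∧ p.concl = B ∧
      (∀ F, (ℓ, F) ∈ q.openAss → F = Formula.disj A B) ∧
      (ℓ, Formula.disj A B) ∈ q.openAss
  | .orE ℓA ℓB A B p q r => p.wf ∧ q.wf ∧ r.wf ∧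
      p.concl = Formula.disj A B ∧ q.concl = r.concl ∧
      (∀ F, (ℓA, F) ∈ q.openAss → F = A) ∧ (ℓA, A) ∈ q.openAss ∧
      (∀ F, (ℓB, F) ∈ r.openAss → F = B) ∧ (ℓB, B) ∈ r.openAss
  | .impI ℓ A B p q => p.wf ∧ q.wf ∧ p.concl = B ∧
      (∀ F, (ℓ, F) ∈ q.openAss → F = Formula.imp A B) ∧
      (ℓ, Formula.imp A B) ∈ q.openAss
  | .tr ℓA ℓAB A B p q => p.wf ∧ q.wf ∧ p.concl = q.concl ∧
      (∀ F, (ℓA, F) ∈ p.openAss → F = A) ∧ (ℓA, A) ∈ p.openAss ∧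
      (∀ F, (ℓAB, F) ∈ q.openAss → F = Formula.imp A B) ∧
      (ℓAB, Formula.imp A B) ∈ q.openAss
  | .impE ℓ A B p q r => p.wf ∧ q.wf ∧ r.wf ∧
      p.concl = Formula.imp A B ∧ q.concl = A ∧
      (∀ F, (ℓ, F) ∈ r.openAss → F = B) ∧ (ℓ, B) ∈ r.openAss
  | .negI ℓA ℓnA A p q => p.wf ∧ q.wf ∧ p.concl = q.concl ∧
      (∀ F, (ℓA, F) ∈ p.openAss → F = A) ∧ (ℓA, A) ∈ p.openAss ∧
      (∀ F, (ℓnA, F) ∈ q.openAss → F = Formula.neg A) ∧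
      (ℓnA, Formula.neg A) ∈ q.openAss
  | .negE A _ p q => p.wf ∧ q.wf ∧ p.concl = Formula.neg A ∧ q.concl = A

/-- The set of formulas that occur as undischarged assumptions of a deduction. -/
def assumptions (d : PT) : Set Formula := {A | ∃ ℓ, (ℓ, A) ∈ d.openAss}

end PT
/-- `Subf A B`: `A` is a subformula of `B`. -/
inductive Subf : Formula → Formula → Prop
  | refl (A : Formula) : Subf A A
  | neg {F A : Formula} : Subf F A → Subf F (Formula.neg A)
  | conjL {F A B : Formula} : Subf F A → Subf F (Formula.conj A B)
  | conjR {F A B : Formula} : Subf F B → Subf F (Formula.conj A B)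
  | disjL {F A B : Formula} : Subf F A → Subf F (Formula.disj A B)
  | disjR {F A B : Formula} : Subf F B → Subf F (Formula.disj A B)
  | impL {F A B : Formula} : Subf F A → Subf F (Formula.imp A B)
  | impR {F A B : Formula} : Subf F B → Subf F (Formula.imp A B)

namespace PT

/-- The multiset of all formula occurrences in a deduction: every occurrence
in a deduction is either an assumption (a leaf) or the conclusion of some rule
application (the root of a subdeduction). -/
def formulas : PT → Multiset Formula
  | .ass _ A => {A}
  | .andI ℓ A B p q r =>
      (PT.andI ℓ A B p q r).concl ::ₘ (p.formulas + q.formulas + r.formulas)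
  | .andE ℓA ℓB A B p q =>
      (PT.andE ℓA ℓB A B p q).concl ::ₘ (p.formulas + q.formulas)
  | .orI₁ ℓ A B p q => (PT.orI₁ ℓ A B p q).concl ::ₘ (p.formulas + q.formulas)
  | .orI₂ ℓ A B p q => (PT.orI₂ ℓ A B p q).concl ::ₘ (p.formulas + q.formulas)
  | .orE ℓA ℓB A B p q r =>
      (PT.orE ℓA ℓB A B p q r).concl ::ₘ (p.formulas + q.formulas + r.formulas)
  | .impI ℓ A B p q => (PT.impI ℓ A B p q).concl ::ₘ (p.formulas + q.formulas)
  | .tr ℓA ℓAB A B p q =>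
      (PT.tr ℓA ℓAB A B p q).concl ::ₘ (p.formulas + q.formulas)
  | .impE ℓ A B p q r =>
      (PT.impE ℓ A B p q r).concl ::ₘ (p.formulas + q.formulas + r.formulas)
  | .negI ℓA ℓnA A p q =>
      (PT.negI ℓA ℓnA A p q).concl ::ₘ (p.formulas + q.formulas)
  | .negE A C p q => C ::ₘ (p.formulas + q.formulas)

/-- A deduction has the *subformula property* if every formula occurring in it
is a subformula of its conclusion or of one of its undischarged assumptions. -/
def subformulaProperty (d : PT) : Prop :=
  ∀ F ∈ d.formulas, Subf F d.concl ∨ ∃ G ∈ d.assumptions, Subf F G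

end PT
/-- The value of a formula under a Boolean valuation of the atoms, by the
classical truth tables for ¬, ∧, ∨, ⊃. -/
def Formula.eval (v : ℕ → Bool) : Formula → Bool
  | .atom n => v n
  | .neg A => !(A.eval v)
  | .conj A B => A.eval v && B.eval v
  | .disj A B => A.eval v || B.eval v
  | .imp A B => !(A.eval v) || B.eval v

/-! By compactness of the Cantor space `ℕ → Bool`, `A` is a consequence of a finite part `L`
of `Γ`, so the sequent `L ⇒ A` is valid. Valid sequents are derivable by the usual root-first
proof search, which decomposes formulas into their immediate subformulas until only atoms are
left, and then a valid sequent of atoms is an axiom `p ⇒ p`. Each rule of this search is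
admissible in **C** when the sequent `L ⇒ R` is read in continuation-passing style relative to a
fixed conclusion `C`; the right rules for `¬` and `⊃` rely on the case distinctions `¬I` and
Tarski's rule. Only subformulas of the end sequent are ever introduced, whence the subformula
property. -/

open Formula List

namespace Formula

def code : Formula → ℕ
  | atom n => Nat.pair 0 n
  | neg A => Nat.pair 1 A.code
  | conj A B => Nat.pair 2 (Nat.pair A.code B.code)
  | disj A B => Nat.pair 3 (Nat.pair A.code B.code)
  | imp A B => Nat.pair 4 (Nat.pair A.code B.code)

theorem code_injective : Function.Injective code := by
  intro A B h
  induction A generalizing B <;> cases B <;> simp only [code, Nat.pair_eq_pair] at h <;> grind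

theorem continuous_eval (A : Formula) : Continuous fun v : ℕ → Bool => A.eval v := by
  induction A with
  | atom n => exact continuous_apply n
  | neg A ih => exact continuous_of_discreteTopology.comp ih
  | conj A B ihA ihB =>
    exact (continuous_of_discreteTopology (f := fun p : Bool × Bool => p.1 && p.2)).comp
      (ihA.prodMk ihB)
  | disj A B ihA ihB =>
    exact (continuous_of_discreteTopology (f := fun p : Bool × Bool => p.1 || p.2)).comp
      (ihA.prodMk ihB)
  | imp A B ihA ihB =>
    exact (continuous_of_discreteTopology (f := fun p : Bool × Bool => !p.1 || p.2)).comp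
      (ihA.prodMk ihB)

theorem exists_finite_subset_entails {Γ : Set Formula} {A : Formula}
    (h : ∀ v : ℕ → Bool, (∀ B ∈ Γ, B.eval v = true) → A.eval v = true) :
    ∃ Δ ⊆ Γ, Δ.Finite ∧
      ∀ v : ℕ → Bool, (∀ B ∈ Δ, B.eval v = true) → A.eval v = true := by
  have hK : IsCompact {v : ℕ → Bool | A.eval v = false} :=
    ((isClosed_discrete {false}).preimage A.continuous_eval).isCompact
  have hcover : {v : ℕ → Bool | A.eval v = false} ⊆ ⋃ B ∈ Γ, {v | B.eval v = false} := by
    intro v hv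
    by_contra hv'
    simp_all
  obtain ⟨Δ, hΔΓ, hΔ, hcover⟩ := hK.elim_finite_subcover_image
    (fun B _ => (isOpen_discrete {false}).preimage B.continuous_eval) hcover
  refine ⟨Δ, hΔΓ, hΔ, fun v hv => ?_⟩
  by_contra hA
  obtain ⟨B, hB, hBv⟩ := Set.mem_iUnion₂.1 (hcover (by simpa using hA))
  simp_all

end Formula

theorem Subf.trans {F G H : Formula} (hFG : Subf F G) (hGH : Subf G H) : Subf F H := by
  induction hGH with
  | refl => exact hFG
  | neg _ ih => exact ih.neg
  | conjL _ ih => exact ih.conjL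
  | conjR _ ih => exact ih.conjR
  | disjL _ ih => exact ih.disjL
  | disjR _ ih => exact ih.disjR
  | impL _ ih => exact ih.impL
  | impR _ ih => exact ih.impR

def SubfClosed (S : Set Formula) : Prop := ∀ ⦃F G⦄, Subf F G → G ∈ S → F ∈ S

theorem PT.concl_mem_formulas (d : PT) : d.concl ∈ d.formulas := by
  cases d <;> simp [PT.formulas, PT.concl]

section Derivability

variable {S Γ : Set Formula} {A B C : Formula} {m m' : Multiset (ℕ × Formula)}

/-- Labelling every assumption by the code of its formula makes each assumption class consist
of the occurrences of a single formula: combining deductions never puts different formulas into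
one class, and a rule discharges all open occurrences of a formula. -/
def LabelledIn (Γ : Set Formula) (m : Multiset (ℕ × Formula)) : Prop :=
  ∀ z ∈ m, z.1 = z.2.code ∧ z.2 ∈ Γ

namespace LabelledIn

@[simp] theorem add_iff : LabelledIn Γ (m + m') ↔ LabelledIn Γ m ∧ LabelledIn Γ m' := by
  simp only [LabelledIn, Multiset.mem_add, or_imp, forall_and]
  tauto

@[simp] theorem cons_iff :
    LabelledIn Γ ((A.code, A) ::ₘ m) ↔ A ∈ Γ ∧ LabelledIn Γ m := by
  simp [LabelledIn]

theorem mono (h : LabelledIn Γ m) {Γ' : Set Formula} (hΓ : Γ ⊆ Γ') : LabelledIn Γ' m :=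
  fun z hz => ⟨(h z hz).1, hΓ (h z hz).2⟩

theorem eq_of_mem (h : LabelledIn Γ m) {F : Formula} (hF : (A.code, F) ∈ m) : F = A :=
  code_injective (h _ hF).1.symm

theorem filter_ne (h : LabelledIn (insert A Γ) m) :
    LabelledIn Γ (m.filter fun z => z.1 ≠ A.code) := by
  intro z hz
  rw [Multiset.mem_filter] at hz
  obtain ⟨hcode, hmem⟩ := h z hz.1
  refine ⟨hcode, hmem.resolve_left ?_⟩
  rintro rfl
  exact hz.2 hcode

theorem of_not_mem (h : LabelledIn (insert A Γ) m) (hA : (A.code, A) ∉ m) :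
    LabelledIn Γ m := by
  intro z hz
  obtain ⟨hcode, hmem⟩ := h z hz
  refine ⟨hcode, hmem.resolve_left ?_⟩
  rintro rfl
  exact hA (hcode ▸ hz)

end LabelledIn

def Prov (S Γ : Set Formula) (C : Formula) : Prop :=
  ∃ d : PT, d.wf ∧ d.concl = C ∧ LabelledIn Γ d.openAss ∧ ∀ F ∈ d.formulas, F ∈ S

namespace Prov

theorem mono (h : Prov S Γ C) {Γ' : Set Formula} (hΓ : Γ ⊆ Γ') : Prov S Γ' C :=
  let ⟨d, hw, hc, hl, hf⟩ := h
  ⟨d, hw, hc, hl.mono hΓ, hf⟩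

theorem ass (hΓ : C ∈ Γ) (hS : C ∈ S) : Prov S Γ C :=
  ⟨.ass C.code C, trivial, rfl, by simpa [PT.openAss, LabelledIn], by simpa [PT.formulas]⟩

theorem andI (hA : Prov S Γ A) (hB : Prov S Γ B) (hS : conj A B ∈ S) :
    Prov S Γ (conj A B) := by
  obtain ⟨p, pw, pc, pl, pf⟩ := hA
  obtain ⟨q, qw, qc, ql, qf⟩ := hB
  refine ⟨.andI (conj A B).code A B p q (.ass (conj A B).code (conj A B)),
    ⟨pw, qw, trivial, pc, qc, by simp [PT.openAss]⟩, rfl, ?_, ?_⟩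
  · simp [PT.openAss, Multiset.filter_singleton, pl, ql]
  · simp +contextual [PT.formulas, PT.concl, or_imp, hS, pf, qf]

theorem orI₁ (hA : Prov S Γ A) (hS : disj A B ∈ S) : Prov S Γ (disj A B) := by
  obtain ⟨p, pw, pc, pl, pf⟩ := hA
  refine ⟨.orI₁ (disj A B).code A B p (.ass (disj A B).code (disj A B)),
    ⟨pw, trivial, pc, by simp [PT.openAss]⟩, rfl, ?_, ?_⟩
  · simp [PT.openAss, Multiset.filter_singleton, pl]
  · simp +contextual [PT.formulas, PT.concl, or_imp, hS, pf]

theorem orI₂ (hB : Prov S Γ B) (hS : disj A B ∈ S) : Prov S Γ (disj A B) := by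
  obtain ⟨p, pw, pc, pl, pf⟩ := hB
  refine ⟨.orI₂ (disj A B).code A B p (.ass (disj A B).code (disj A B)),
    ⟨pw, trivial, pc, by simp [PT.openAss]⟩, rfl, ?_, ?_⟩
  · simp [PT.openAss, Multiset.filter_singleton, pl]
  · simp +contextual [PT.formulas, PT.concl, or_imp, hS, pf]

theorem impI (hB : Prov S Γ B) (hS : imp A B ∈ S) : Prov S Γ (imp A B) := by
  obtain ⟨p, pw, pc, pl, pf⟩ := hB
  refine ⟨.impI (imp A B).code A B p (.ass (imp A B).code (imp A B)),
    ⟨pw, trivial, pc, by simp [PT.openAss]⟩, rfl, ?_, ?_⟩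
  · simp [PT.openAss, Multiset.filter_singleton, pl]
  · simp +contextual [PT.formulas, PT.concl, or_imp, hS, pf]

theorem negE (hΓ : neg A ∈ Γ) (hS : neg A ∈ S) (hA : Prov S Γ A) (hC : C ∈ S) :
    Prov S Γ C := by
  obtain ⟨p, pw, pc, pl, pf⟩ := hA
  refine ⟨.negE A C (.ass (neg A).code (neg A)) p, ⟨trivial, pw, rfl, pc⟩, rfl, ?_, ?_⟩
  · simp [PT.openAss, pl, hΓ]
  · simp +contextual [PT.formulas, or_imp, hS, pf, hC]

/- In the eliminations, `tr` and `negI`, a branch that does not use the assumption it would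
discharge is already the required deduction; the rules forbid vacuous discharge. -/

theorem andE (hΓ : conj A B ∈ Γ) (hS : conj A B ∈ S) (h : Prov S (insert B (insert A Γ)) C) :
    Prov S Γ C := by
  obtain ⟨q, qw, rfl, ql, qf⟩ := h
  by_cases hq : (A.code, A) ∈ q.openAss ∨ (B.code, B) ∈ q.openAss
  · refine ⟨.andE A.code B.code A B (.ass (conj A B).code (conj A B)) q,
      ⟨trivial, qw, rfl, fun _ => ql.eq_of_mem, fun _ => ql.eq_of_mem, hq⟩, rfl, ?_, ?_⟩
    · have := ql.filter_ne.filter_ne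
      rw [Multiset.filter_filter] at this
      simpa [PT.openAss, hΓ] using this
    · simp +contextual [PT.formulas, PT.concl, or_imp, hS, qf, PT.concl_mem_formulas]
  · rw [not_or] at hq
    exact ⟨q, qw, rfl, (ql.of_not_mem hq.2).of_not_mem hq.1, qf⟩

theorem orE (hΓ : disj A B ∈ Γ) (hS : disj A B ∈ S) (hA : Prov S (insert A Γ) C)
    (hB : Prov S (insert B Γ) C) : Prov S Γ C := by
  obtain ⟨q, qw, rfl, ql, qf⟩ := hA
  by_cases hq : (A.code, A) ∈ q.openAss
  swap; exact ⟨q, qw, rfl, ql.of_not_mem hq, qf⟩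
  obtain ⟨r, rw, rc, rl, rf⟩ := hB
  by_cases hr : (B.code, B) ∈ r.openAss
  swap; exact ⟨r, rw, rc, rl.of_not_mem hr, rf⟩
  refine ⟨.orE A.code B.code A B (.ass (disj A B).code (disj A B)) q r,
    ⟨trivial, qw, rw, rfl, rc.symm, fun _ => ql.eq_of_mem, hq, fun _ => rl.eq_of_mem, hr⟩,
    rfl, ?_, ?_⟩
  · simpa [PT.openAss, hΓ] using ⟨ql.filter_ne, rl.filter_ne⟩
  · simp +contextual [PT.formulas, PT.concl, or_imp, hS, qf, rf, PT.concl_mem_formulas]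

theorem impE (hΓ : imp A B ∈ Γ) (hS : imp A B ∈ S) (hA : Prov S Γ A)
    (hB : Prov S (insert B Γ) C) : Prov S Γ C := by
  obtain ⟨r, rw, rfl, rl, rf⟩ := hB
  by_cases hr : (B.code, B) ∈ r.openAss
  swap; exact ⟨r, rw, rfl, rl.of_not_mem hr, rf⟩
  obtain ⟨q, qw, qc, ql, qf⟩ := hA
  refine ⟨.impE B.code A B (.ass (imp A B).code (imp A B)) q r,
    ⟨trivial, qw, rw, rfl, qc, fun _ => rl.eq_of_mem, hr⟩, rfl, ?_, ?_⟩
  · simpa [PT.openAss, hΓ] using ⟨ql, rl.filter_ne⟩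
  · simp +contextual [PT.formulas, PT.concl, or_imp, hS, qf, rf, PT.concl_mem_formulas]

theorem tr (hA : Prov S (insert A Γ) C) (hAB : Prov S (insert (imp A B) Γ) C) :
    Prov S Γ C := by
  obtain ⟨p, pw, rfl, pl, pf⟩ := hA
  by_cases hp : (A.code, A) ∈ p.openAss
  swap; exact ⟨p, pw, rfl, pl.of_not_mem hp, pf⟩
  obtain ⟨q, qw, qc, ql, qf⟩ := hAB
  by_cases hq : ((imp A B).code, imp A B) ∈ q.openAss
  swap; exact ⟨q, qw, qc, ql.of_not_mem hq, qf⟩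
  refine ⟨.tr A.code (imp A B).code A B p q,
    ⟨pw, qw, qc.symm, fun _ => pl.eq_of_mem, hp, fun _ => ql.eq_of_mem, hq⟩, rfl, ?_, ?_⟩
  · simpa [PT.openAss] using ⟨pl.filter_ne, ql.filter_ne⟩
  · simp +contextual [PT.formulas, PT.concl, or_imp, pf, qf, PT.concl_mem_formulas]

theorem negI (hA : Prov S (insert A Γ) C) (hnA : Prov S (insert (neg A) Γ) C) :
    Prov S Γ C := by
  obtain ⟨p, pw, rfl, pl, pf⟩ := hA
  by_cases hp : (A.code, A) ∈ p.openAss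
  swap; exact ⟨p, pw, rfl, pl.of_not_mem hp, pf⟩
  obtain ⟨q, qw, qc, ql, qf⟩ := hnA
  by_cases hq : ((neg A).code, neg A) ∈ q.openAss
  swap; exact ⟨q, qw, qc, ql.of_not_mem hq, qf⟩
  refine ⟨.negI A.code (neg A).code A p q,
    ⟨pw, qw, qc.symm, fun _ => pl.eq_of_mem, hp, fun _ => ql.eq_of_mem, hq⟩, rfl, ?_, ?_⟩
  · simpa [PT.openAss] using ⟨pl.filter_ne, ql.filter_ne⟩
  · simp +contextual [PT.formulas, PT.concl, or_imp, pf, qf, PT.concl_mem_formulas]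

end Prov

end Derivability

section Sequents

variable {S Γ : Set Formula} {A B C : Formula} {L R : List Formula}

def ReducesTo (S Γ : Set Formula) (C D : Formula) : Prop :=
  ∀ Γ', Γ ⊆ Γ' → Prov S Γ' D → Prov S Γ' C

theorem ReducesTo.mono {D : Formula} (h : ReducesTo S Γ C D) {Γ' : Set Formula}
    (hΓ : Γ ⊆ Γ') : ReducesTo S Γ' C D :=
  fun _ hΓ' => h _ (hΓ.trans hΓ')

/-- The sequent `L ⇒ R` over `S`, read in continuation-passing style with answer type `C`. -/
def SeqProv (S : Set Formula) (C : Formula) (L R : List Formula) : Prop :=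
  (∀ X ∈ L, X ∈ S) → (∀ X ∈ R, X ∈ S) → ∀ Γ : Set Formula, (∀ X ∈ L, X ∈ Γ) →
    (∀ D ∈ R, ReducesTo S Γ C D) → Prov S Γ C

theorem forall_mem_cons_insert {X : Formula} (hΓ : ∀ Y ∈ L, Y ∈ Γ) :
    ∀ Y ∈ X :: L, Y ∈ insert X Γ :=
  forall_mem_cons.2 ⟨Set.mem_insert X Γ, fun Y hY => Set.mem_insert_of_mem X (hΓ Y hY)⟩

namespace SeqProv

theorem mono (h : SeqProv S C L R) {L' R' : List Formula} (hL : L ⊆ L') (hR : R ⊆ R') :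
    SeqProv S C L' R' :=
  fun hLS hRS Γ hΓ hκ => h (fun X hX => hLS X (hL hX)) (fun X hX => hRS X (hR hX)) Γ
    (fun X hX => hΓ X (hL hX)) (fun D hD => hκ D (hR hD))

theorem ax {X : Formula} (hL : X ∈ L) (hR : X ∈ R) : SeqProv S C L R :=
  fun _ hRS Γ hΓ hκ => hκ X hR Γ subset_rfl (.ass (hΓ X hL) (hRS X hR))

theorem negL (hS : SubfClosed S) (hC : C ∈ S) (h : SeqProv S C L (A :: R)) :
    SeqProv S C (neg A :: L) R := by
  intro hLS hRS Γ hΓ hκ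
  rw [forall_mem_cons] at hLS hΓ
  refine h hLS.2 (forall_mem_cons.2 ⟨hS (.neg (.refl A)) hLS.1, hRS⟩) Γ hΓ.2
    (forall_mem_cons.2 ⟨fun Γ' hΓ' pA => .negE (hΓ' hΓ.1) hLS.1 pA hC, hκ⟩)

theorem negR (hS : SubfClosed S) (h : SeqProv S C (A :: L) R) :
    SeqProv S C L (neg A :: R) := by
  intro hLS hRS Γ hΓ hκ
  rw [forall_mem_cons] at hRS hκ
  refine .negI (h (forall_mem_cons.2 ⟨hS (.neg (.refl A)) hRS.1, hLS⟩) hRS.2 _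
    (forall_mem_cons_insert hΓ) fun D hD => (hκ.2 D hD).mono (Set.subset_insert _ _))
    (hκ.1 _ (Set.subset_insert _ _) (.ass (Set.mem_insert _ _) hRS.1))

theorem conjL (hS : SubfClosed S) (h : SeqProv S C (A :: B :: L) R) :
    SeqProv S C (conj A B :: L) R := by
  intro hLS hRS Γ hΓ hκ
  rw [forall_mem_cons] at hLS hΓ
  have hsub : Γ ⊆ insert B (insert A Γ) :=
    (Set.subset_insert _ _).trans (Set.subset_insert _ _)
  refine .andE hΓ.1 hLS.1 (h ?_ hRS _ ?_ fun D hD => (hκ D hD).mono hsub)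
  · exact forall_mem_cons.2 ⟨hS (.conjL (.refl A)) hLS.1,
      forall_mem_cons.2 ⟨hS (.conjR (.refl B)) hLS.1, hLS.2⟩⟩
  · simp only [forall_mem_cons, Set.mem_insert_iff, true_or, or_true, true_and]
    exact fun X hX => hsub (hΓ.2 X hX)

theorem conjR (hS : SubfClosed S) (hA : SeqProv S C L (A :: R))
    (hB : SeqProv S C L (B :: R)) :
    SeqProv S C L (conj A B :: R) := by
  intro hLS hRS Γ hΓ hκ
  rw [forall_mem_cons] at hRS hκ
  refine hA hLS (forall_mem_cons.2 ⟨hS (.conjL (.refl A)) hRS.1, hRS.2⟩) Γ hΓ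
    (forall_mem_cons.2 ⟨fun Γ' hΓ' pA => ?_, hκ.2⟩)
  refine hB hLS (forall_mem_cons.2 ⟨hS (.conjR (.refl B)) hRS.1, hRS.2⟩) Γ'
    (fun X hX => hΓ' (hΓ X hX))
    (forall_mem_cons.2 ⟨fun Γ'' hΓ'' pB => ?_, fun D hD => (hκ.2 D hD).mono hΓ'⟩)
  exact hκ.1 _ (hΓ'.trans hΓ'') (.andI (pA.mono hΓ'') pB hRS.1)

theorem disjL (hS : SubfClosed S) (hA : SeqProv S C (A :: L) R)
    (hB : SeqProv S C (B :: L) R) :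
    SeqProv S C (disj A B :: L) R := by
  intro hLS hRS Γ hΓ hκ
  rw [forall_mem_cons] at hLS hΓ
  exact .orE hΓ.1 hLS.1
    (hA (forall_mem_cons.2 ⟨hS (.disjL (.refl A)) hLS.1, hLS.2⟩) hRS _
      (forall_mem_cons_insert hΓ.2) fun D hD => (hκ D hD).mono (Set.subset_insert _ _))
    (hB (forall_mem_cons.2 ⟨hS (.disjR (.refl B)) hLS.1, hLS.2⟩) hRS _
      (forall_mem_cons_insert hΓ.2) fun D hD => (hκ D hD).mono (Set.subset_insert _ _))

theorem disjR (hS : SubfClosed S) (h : SeqProv S C L (A :: B :: R)) :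
    SeqProv S C L (disj A B :: R) := by
  intro hLS hRS Γ hΓ hκ
  rw [forall_mem_cons] at hRS hκ
  refine h hLS (forall_mem_cons.2 ⟨hS (.disjL (.refl A)) hRS.1,
    forall_mem_cons.2 ⟨hS (.disjR (.refl B)) hRS.1, hRS.2⟩⟩) Γ hΓ
    (forall_mem_cons.2 ⟨?_, forall_mem_cons.2 ⟨?_, hκ.2⟩⟩)
  · exact fun Γ' hΓ' pA => hκ.1 Γ' hΓ' (.orI₁ pA hRS.1)
  · exact fun Γ' hΓ' pB => hκ.1 Γ' hΓ' (.orI₂ pB hRS.1)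

theorem impL (hS : SubfClosed S) (hA : SeqProv S C L (A :: R))
    (hB : SeqProv S C (B :: L) R) :
    SeqProv S C (imp A B :: L) R := by
  intro hLS hRS Γ hΓ hκ
  rw [forall_mem_cons] at hLS hΓ
  refine hA hLS.2 (forall_mem_cons.2 ⟨hS (.impL (.refl A)) hLS.1, hRS⟩) Γ hΓ.2
    (forall_mem_cons.2 ⟨fun Γ' hΓ' pA => ?_, hκ⟩)
  exact .impE (hΓ' hΓ.1) hLS.1 pA
    (hB (forall_mem_cons.2 ⟨hS (.impR (.refl B)) hLS.1, hLS.2⟩) hRS _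
      (forall_mem_cons_insert fun X hX => hΓ' (hΓ.2 X hX))
      fun D hD => (hκ D hD).mono (hΓ'.trans (Set.subset_insert _ _)))

theorem impR (hS : SubfClosed S) (h : SeqProv S C (A :: L) (B :: R)) :
    SeqProv S C L (imp A B :: R) := by
  intro hLS hRS Γ hΓ hκ
  rw [forall_mem_cons] at hRS hκ
  refine .tr (B := B) ?_ (hκ.1 _ (Set.subset_insert _ _) (.ass (Set.mem_insert _ _) hRS.1))
  refine h (forall_mem_cons.2 ⟨hS (.impL (.refl A)) hRS.1, hLS⟩)
    (forall_mem_cons.2 ⟨hS (.impR (.refl B)) hRS.1, hRS.2⟩) _ (forall_mem_cons_insert hΓ)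
    (forall_mem_cons.2 ⟨fun Γ' hΓ' pB => ?_,
      fun D hD => (hκ.2 D hD).mono (Set.subset_insert _ _)⟩)
  exact hκ.1 Γ' ((Set.subset_insert _ _).trans hΓ') (.impI pB hRS.1)

end SeqProv

end Sequents

section Validity

variable {A B : Formula} {L R : List Formula}

def Valid (L R : List Formula) : Prop :=
  ∀ v : ℕ → Bool, (∀ X ∈ L, X.eval v = true) → ∃ Y ∈ R, Y.eval v = true

namespace Valid

theorem mono (h : Valid L R) {L' R' : List Formula} (hL : L ⊆ L') (hR : R ⊆ R') :
    Valid L' R' :=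
  fun v hv => let ⟨Y, hY, hYv⟩ := h v fun X hX => hv X (hL hX); ⟨Y, hR hY, hYv⟩

theorem negL (h : Valid (neg A :: L) R) : Valid L (A :: R) := by
  intro v hv; have := h v; by_cases hA : A.eval v <;> simp_all [Formula.eval]

theorem negR (h : Valid L (neg A :: R)) : Valid (A :: L) R := by
  intro v hv; have := h v; simp_all [Formula.eval]

theorem conjL (h : Valid (conj A B :: L) R) : Valid (A :: B :: L) R := by
  intro v hv; have := h v; simp_all [Formula.eval]

theorem conjR_left (h : Valid L (conj A B :: R)) : Valid L (A :: R) := by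
  intro v hv; have := h v; by_cases hA : A.eval v <;> simp_all [Formula.eval]

theorem conjR_right (h : Valid L (conj A B :: R)) : Valid L (B :: R) := by
  intro v hv; have := h v; by_cases hB : B.eval v <;> simp_all [Formula.eval]

theorem disjL_left (h : Valid (disj A B :: L) R) : Valid (A :: L) R := by
  intro v hv; have := h v; simp_all [Formula.eval]

theorem disjL_right (h : Valid (disj A B :: L) R) : Valid (B :: L) R := by
  intro v hv; have := h v; simp_all [Formula.eval]

theorem disjR (h : Valid L (disj A B :: R)) : Valid L (A :: B :: R) := by
  intro v hv; have := h v; simp_all [Formula.eval, or_assoc]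

theorem impL_left (h : Valid (imp A B :: L) R) : Valid L (A :: R) := by
  intro v hv; have := h v; by_cases hA : A.eval v <;> simp_all [Formula.eval]

theorem impL_right (h : Valid (imp A B :: L) R) : Valid (B :: L) R := by
  intro v hv; have := h v; simp_all [Formula.eval]

theorem impR (h : Valid L (imp A B :: R)) : Valid (A :: L) (B :: R) := by
  intro v hv; have := h v; simp_all [Formula.eval]

end Valid

end Validity

section Completeness

variable {S : Set Formula} {C : Formula}

theorem SeqProv.of_valid_atoms {Pa Θa : List ℕ} (hv : Valid (Pa.map atom) (Θa.map atom)) :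
    SeqProv S C (Pa.map atom) (Θa.map atom) := by
  obtain ⟨_, hY, hYv⟩ := hv (fun n => decide (n ∈ Pa)) (by simp [Formula.eval])
  obtain ⟨m, -, rfl⟩ := List.mem_map.1 hY
  exact .ax (List.mem_map_of_mem (by simpa [Formula.eval] using hYv)) hY

theorem SeqProv.of_valid_append_atoms (hS : SubfClosed S) (hC : C ∈ S) :
    (P Θ : List Formula) → (Pa Θa : List ℕ) → Valid (P ++ Pa.map atom) (Θ ++ Θa.map atom) →
      SeqProv S C (P ++ Pa.map atom) (Θ ++ Θa.map atom)
  | atom n :: P, Θ, Pa, Θa, hv =>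
    (of_valid_append_atoms hS hC P Θ (n :: Pa) Θa
      (hv.mono perm_middle.symm.subset (Subset.refl _))).mono perm_middle.subset (Subset.refl _)
  | neg A :: P, Θ, Pa, Θa, hv =>
    .negL hS hC (of_valid_append_atoms hS hC P (A :: Θ) Pa Θa hv.negL)
  | conj A B :: P, Θ, Pa, Θa, hv =>
    .conjL hS (of_valid_append_atoms hS hC (A :: B :: P) Θ Pa Θa hv.conjL)
  | disj A B :: P, Θ, Pa, Θa, hv =>
    .disjL hS (of_valid_append_atoms hS hC (A :: P) Θ Pa Θa hv.disjL_left)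
      (of_valid_append_atoms hS hC (B :: P) Θ Pa Θa hv.disjL_right)
  | imp A B :: P, Θ, Pa, Θa, hv =>
    .impL hS (of_valid_append_atoms hS hC P (A :: Θ) Pa Θa hv.impL_left)
      (of_valid_append_atoms hS hC (B :: P) Θ Pa Θa hv.impL_right)
  | [], atom n :: Θ, Pa, Θa, hv =>
    (of_valid_append_atoms hS hC [] Θ Pa (n :: Θa)
      (hv.mono (Subset.refl _) perm_middle.symm.subset)).mono (Subset.refl _) perm_middle.subset
  | [], neg A :: Θ, Pa, Θa, hv =>
    .negR hS (of_valid_append_atoms hS hC [A] Θ Pa Θa hv.negR)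
  | [], conj A B :: Θ, Pa, Θa, hv =>
    .conjR hS (of_valid_append_atoms hS hC [] (A :: Θ) Pa Θa hv.conjR_left)
      (of_valid_append_atoms hS hC [] (B :: Θ) Pa Θa hv.conjR_right)
  | [], disj A B :: Θ, Pa, Θa, hv =>
    .disjR hS (of_valid_append_atoms hS hC [] (A :: B :: Θ) Pa Θa hv.disjR)
  | [], imp A B :: Θ, Pa, Θa, hv =>
    .impR hS (of_valid_append_atoms hS hC [A] (B :: Θ) Pa Θa hv.impR)
  | [], [], _, _, hv => .of_valid_atoms hv
termination_by P Θ => (P.map sizeOf).sum + (Θ.map sizeOf).sum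
decreasing_by all_goals simp <;> omega

theorem SeqProv.of_valid (hS : SubfClosed S) (hC : C ∈ S) {L R : List Formula}
    (hv : Valid L R) : SeqProv S C L R := by
  simpa using of_valid_append_atoms hS hC L R [] [] (by simpa using hv)

end Completeness

/-- If every Boolean valuation making all formulas of `Γ`
true makes `A` true, then there is a deduction of `A` from assumptions in `Γ`
in the system C in which every occurring formula is a subformula of `A` or of
some formula in `Γ`. -/
theorem semantic_consequence_subformula_deduction (Γ : Set Formula) (A : Formula)
    (h : ∀ v : ℕ → Bool, (∀ B ∈ Γ, B.eval v = true) → A.eval v = true) :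
    ∃ d : PT, d.wf ∧ d.concl = A ∧ d.assumptions ⊆ Γ ∧
      ∀ F ∈ d.formulas, Subf F A ∨ ∃ G ∈ Γ, Subf F G := by
  obtain ⟨Δ, hΔΓ, hΔ, hΔA⟩ := exists_finite_subset_entails h
  set L := hΔ.toFinset.toList
  have hLΓ : ∀ B ∈ L, B ∈ Γ := fun B hB => hΔΓ (by simpa [L] using hB)
  have hL : Valid L [A] := fun v hv => ⟨A, mem_singleton_self A, hΔA v (by simpa [L] using hv)⟩
  set S := {F | Subf F A ∨ ∃ G ∈ Γ, Subf F G}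
  have hS : SubfClosed S := by
    rintro F G hFG (hGA | ⟨G', hG', hGG'⟩)
    exacts [.inl (hFG.trans hGA), .inr ⟨G', hG', hFG.trans hGG'⟩]
  obtain ⟨d, hw, hc, hl, hf⟩ := SeqProv.of_valid hS (.inl (.refl A)) hL
    (fun B hB => .inr ⟨B, hLΓ B hB, .refl B⟩) (forall_mem_singleton.2 (.inl (.refl A))) Γ hLΓ
    (forall_mem_singleton.2 fun _ _ => id)
  exact ⟨d, hw, hc, fun F ⟨_, hF⟩ => (hl _ hF).2, hf⟩
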